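/- arXiv:math/0311414 — 12 statements merged into one kernel-verified Lean document; each statement's English description precedes it below -/
import Mathlib

section
/- Let S be a semigroup and Ω ⊆ S × S a relation satisfying: (i) Ω ∩ E(a) = Ω ∩ F(a) for all a; (ii) b(Ω ∩ E(ab)) ⊆ Ω for all a,b; (iii) (Ω ∩ F(ab))a ⊆ Ω for all a,b. Then for all a, b ∈ S, Ω ∩ E(a) ⊆ Ω ∩ E(ab) ∩ E(ba). -/
def Erel {S : Type*} [Semigroup S] (a : S) : Set (S × S) := {p | a * p.1 = a * p.2}
def Frel {S : Type*} [Semigroup S] (a : S) : Set (S × S) := {p | p.1 * a = p.2 * a}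

theorem omega_inter_erel_subset {S : Type*} [Semigroup S] (Ω : Set (S × S))
    (h8 : ∀ a : S, Ω ∩ Erel a = Ω ∩ Frel a)
    (h9 : ∀ a b : S, (fun p : S × S => (b * p.1, b * p.2)) '' (Ω ∩ Erel (a * b)) ⊆ Ω)
    (h10 : ∀ a b : S, (fun p : S × S => (p.1 * a, p.2 * a)) '' (Ω ∩ Frel (a * b)) ⊆ Ω)
    (a b : S) :
    Ω ∩ Erel a ⊆ Ω ∩ Erel (a * b) ∩ Erel (b * a) := by
  intro p hp
  have hF : p ∈ Ω ∩ Frel a := by rw [← h8]; exact hp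
  have hFab : p ∈ Ω ∩ Frel (a * b) := by
    refine ⟨hp.1, ?_⟩
    show p.1 * (a * b) = p.2 * (a * b)
    rw [← mul_assoc, ← mul_assoc, hF.2]
  have hEab : p ∈ Ω ∩ Erel (a * b) := by rw [h8]; exact hFab
  refine ⟨hEab, ?_⟩
  show b * a * p.1 = b * a * p.2
  rw [mul_assoc, mul_assoc, hp.2]
end

section
/- Let S be a semigroup and Ω ⊆ S × S a relation satisfying: (i) Ω ∩ E(a) = Ω ∩ F(a) for all a; (ii) b(Ω ∩ E(ab)) ⊆ Ω for all a,b; (iii) (Ω ∩ F(ab))a ⊆ Ω for all a,b. Then the equivalence relation a ∼ b ⟺ Ω ∩ E(a) = Ω ∩ E(b) is a congruence on S (compatible with multiplication on both sides). -/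
lemma right_incl {S : Type*} [Semigroup S] (Ω : Set (S × S))
    (h9 : ∀ a b : S, (fun p : S × S => (b * p.1, b * p.2)) '' (Ω ∩ Erel (a * b)) ⊆ Ω)
    (a b c : S) (hab : Ω ∩ Erel a = Ω ∩ Erel b) :
    Ω ∩ Erel (a * c) ⊆ Ω ∩ Erel (b * c) := by
  rintro ⟨x, y⟩ ⟨hΩ, hE⟩
  have hE' : (a * c) * x = (a * c) * y := hE
  have h1 : (c * x, c * y) ∈ Ω := h9 a c ⟨(x, y), ⟨hΩ, hE⟩, rfl⟩
  have h2 : (c * x, c * y) ∈ Erel a := by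
    show a * (c * x) = a * (c * y)
    rw [← mul_assoc, ← mul_assoc]; exact hE'
  have h3 : (c * x, c * y) ∈ Ω ∩ Erel b := by rw [← hab]; exact ⟨h1, h2⟩
  refine ⟨hΩ, ?_⟩
  show (b * c) * x = (b * c) * y
  rw [mul_assoc, mul_assoc]; exact h3.2

lemma left_incl {S : Type*} [Semigroup S] (Ω : Set (S × S))
    (h8 : ∀ a : S, Ω ∩ Erel a = Ω ∩ Frel a)
    (h10 : ∀ a b : S, (fun p : S × S => (p.1 * a, p.2 * a)) '' (Ω ∩ Frel (a * b)) ⊆ Ω)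
    (a b c : S) (hab : Ω ∩ Erel a = Ω ∩ Erel b) :
    Ω ∩ Erel (c * a) ⊆ Ω ∩ Erel (c * b) := by
  rintro ⟨x, y⟩ hxy
  have hF : (x, y) ∈ Ω ∩ Frel (c * a) := by rw [← h8]; exact hxy
  have hΩ := hF.1
  have hF' : x * (c * a) = y * (c * a) := hF.2
  have h1 : (x * c, y * c) ∈ Ω := h10 c a ⟨(x, y), hF, rfl⟩
  have h2 : (x * c, y * c) ∈ Frel a := by
    show (x * c) * a = (y * c) * a
    rw [mul_assoc, mul_assoc]; exact hF'
  have h3 : (x * c, y * c) ∈ Ω ∩ Frel b := by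
    rw [← h8, ← hab, h8]; exact ⟨h1, h2⟩
  have h4 : x * (c * b) = y * (c * b) := by
    rw [← mul_assoc, ← mul_assoc]; exact h3.2
  rw [h8]; exact ⟨hΩ, h4⟩

theorem simOmega_is_congruence {S : Type*} [Semigroup S] (Ω : Set (S × S))
    (h8 : ∀ a : S, Ω ∩ Erel a = Ω ∩ Frel a)
    (h9 : ∀ a b : S, (fun p : S × S => (b * p.1, b * p.2)) '' (Ω ∩ Erel (a * b)) ⊆ Ω)
    (h10 : ∀ a b : S, (fun p : S × S => (p.1 * a, p.2 * a)) '' (Ω ∩ Frel (a * b)) ⊆ Ω)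
    (a b : S) (hab : Ω ∩ Erel a = Ω ∩ Erel b) :
    ∀ c : S, Ω ∩ Erel (a * c) = Ω ∩ Erel (b * c) ∧
      Ω ∩ Erel (c * a) = Ω ∩ Erel (c * b) := by
  intro c
  constructor
  · exact le_antisymm (right_incl Ω h9 a b c hab) (right_incl Ω h9 b a c hab.symm)
  · exact le_antisymm (left_incl Ω h8 h10 a b c hab) (left_incl Ω h8 h10 b a c hab.symm)
end

section
/- In a quasi-separative semigroup (where x² = xy = y² implies x = y for all x,y), the condition x² = xy = yx = y² implies x = y, and conversely. -/
theorem quasiSeparative_conditions_equiv {S : Type*} [Semigroup S] :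
    (∀ x y : S, x * x = x * y → x * y = y * x → y * x = y * y → x = y) ↔
    (∀ x y : S, x * x = x * y → x * y = y * y → x = y) := by
  constructor
  · intro h x y hxx hxy
    have e1 : x * x = y * y := hxx.trans hxy
    have h2 : (y*x)*(x*y) = (x*x)*(x*x) := by
      calc (y*x)*(x*y) = y*((x*x)*y) := by simp only [mul_assoc]
        _ = y*((y*y)*y) := by rw [e1]
        _ = (y*y)*(y*y) := by simp only [mul_assoc]
        _ = (x*x)*(x*x) := by rw [e1]
    have h1 : (y*x)*(y*x) = (x*x)*(x*x) := by
      calc (y*x)*(y*x) = y*((x*y)*x) := by simp only [mul_assoc]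
        _ = y*((x*x)*x) := by rw [hxx]
        _ = (y*x)*(x*x) := by simp only [mul_assoc]
        _ = (y*x)*(x*y) := by rw [hxx]
        _ = (x*x)*(x*x) := h2
    have h3 : (x*y)*(y*x) = (x*x)*(x*x) := by
      calc (x*y)*(y*x) = x*((y*y)*x) := by simp only [mul_assoc]
        _ = x*((x*x)*x) := by rw [← e1]
        _ = (x*x)*(x*x) := by simp only [mul_assoc]
    have h4 : (x*y)*(x*y) = (x*x)*(x*x) := by rw [← hxx]
    have hc : y * x = x * y :=
      h (y*x) (x*y) (h1.trans h2.symm) (h2.trans h3.symm) (h3.trans h4.symm)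
    exact h x y hxx hc.symm (hc.trans hxy)
  · intro h x y h1 h2 h3
    exact h x y h1 (h2.trans h3)
end

section
/- Let S be a quasi-separative semigroup and Ω ⊆ S × S a relation satisfying: (i) Ω ∩ E(a) = Ω ∩ F(a) for all a; (ii) b(Ω ∩ E(ab)) ⊆ Ω; (iii) (Ω ∩ F(ab))a ⊆ Ω. Then for all a ∈ S, Ω ∩ E(a) = Ω ∩ E(a²); i.e., the quotient by the congruence a ∼ b ⟺ Ω ∩ E(a) = Ω ∩ E(b) is idempotent. -/
theorem omega_erel_sq {S : Type*} [Semigroup S]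
    (hqs : ∀ x y : S, x * x = x * y → x * y = y * y → x = y)
    (Ω : Set (S × S))
    (h8 : ∀ a : S, Ω ∩ Erel a = Ω ∩ Frel a)
    (h9 : ∀ a b : S, (fun p : S × S => (b * p.1, b * p.2)) '' (Ω ∩ Erel (a * b)) ⊆ Ω)
    (h10 : ∀ a b : S, (fun p : S × S => (p.1 * a, p.2 * a)) '' (Ω ∩ Frel (a * b)) ⊆ Ω)
    (a : S) :
    Ω ∩ Erel a = Ω ∩ Erel (a * a) := by
  ext ⟨x, y⟩
  simp only [Set.mem_inter_iff, Erel, Set.mem_setOf_eq]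
  constructor
  · rintro ⟨hΩ, hE⟩
    exact ⟨hΩ, by rw [mul_assoc, mul_assoc, hE]⟩
  · rintro ⟨hΩ, hE⟩
    refine ⟨hΩ, ?_⟩
    -- (a*x, a*y) ∈ Ω
    have hmem : ((a * x, a * y) : S × S) ∈ Ω := by
      apply h9 a a
      exact ⟨(x, y), ⟨hΩ, hE⟩, rfl⟩
    -- (a*x, a*y) ∈ Erel a
    have hEa : ((a * x, a * y) : S × S) ∈ Erel a := by
      simp only [Erel, Set.mem_setOf_eq]
      rw [← mul_assoc, ← mul_assoc]; exact hE
    -- hence in Frel a : (a*x)*a = (a*y)*a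
    have hFa : (a * x) * a = (a * y) * a := by
      have : ((a * x, a * y) : S × S) ∈ Ω ∩ Frel a := by
        rw [← h8 a]; exact ⟨hmem, hEa⟩
      exact this.2
    -- (a*x, a*y) ∈ Frel (a*x)
    have hFax : ((a * x, a * y) : S × S) ∈ Frel (a * x) := by
      simp only [Frel, Set.mem_setOf_eq]
      rw [← mul_assoc, ← mul_assoc, hFa]
    -- by h8 at a*x : (a*x)*(a*x) = (a*x)*(a*y)
    have h1 : (a * x) * (a * x) = (a * x) * (a * y) := by
      have : ((a * x, a * y) : S × S) ∈ Ω ∩ Erel (a * x) := by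
        rw [h8 (a * x)]; exact ⟨hmem, hFax⟩
      exact this.2
    have h2 : (a * x) * (a * y) = (a * y) * (a * y) := by
      rw [← mul_assoc, ← mul_assoc, hFa]
    exact hqs (a * x) (a * y) h1 h2
end

section
/- Let S be a quasi-separative semigroup and Ω ⊆ S × S a relation satisfying: (i) Ω ∩ E(a) = Ω ∩ F(a) for all a; (ii) b(Ω ∩ E(ab)) ⊆ Ω; (iii) (Ω ∩ F(ab))a ⊆ Ω. Then for all a, b ∈ S, Ω ∩ E(ab) = Ω ∩ E(ba); together with a ∼ a², this shows the quotient S/∼ by the congruence a ∼ b ⟺ Ω ∩ E(a) = Ω ∩ E(b) is a semilattice (commutative idempotent semigroup). -/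
theorem omega_erel_comm {S : Type*} [Semigroup S]
    (hqs : ∀ x y : S, x * x = x * y → x * y = y * y → x = y)
    (Ω : Set (S × S))
    (h8 : ∀ a : S, Ω ∩ Erel a = Ω ∩ Frel a)
    (h9 : ∀ a b : S, (fun p : S × S => (b * p.1, b * p.2)) '' (Ω ∩ Erel (a * b)) ⊆ Ω)
    (h10 : ∀ a b : S, (fun p : S × S => (p.1 * a, p.2 * a)) '' (Ω ∩ Frel (a * b)) ⊆ Ω) :
    (∀ a b : S, Ω ∩ Erel (a * b) = Ω ∩ Erel (b * a)) ∧
    (∀ a : S, Ω ∩ Erel a = Ω ∩ Erel (a * a)) := by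
  have EtoF : ∀ c : S, ∀ p : S × S, p ∈ Ω ∩ Erel c → p ∈ Ω ∩ Frel c := by
    intro c p hp; rw [← h8 c]; exact hp
  have FtoE : ∀ c : S, ∀ p : S × S, p ∈ Ω ∩ Frel c → p ∈ Ω ∩ Erel c := by
    intro c p hp; rw [h8 c]; exact hp
  -- key lemma: the hard direction of quasi-separativity cancellation
  have key : ∀ a x y : S, (x, y) ∈ Ω → a * a * x = a * a * y → a * x = a * y := by
    intro a x y hxy h2
    have hmemE : ((x, y) : S × S) ∈ Ω ∩ Erel (a * a) := ⟨hxy, h2⟩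
    have hΩax : (a * x, a * y) ∈ Ω := h9 a a ⟨(x, y), hmemE, rfl⟩
    -- (a*x, a*y) ∈ E(a), hence ∈ F(a): (a*x)*a = (a*y)*a
    have hF : (a * x) * a = (a * y) * a := by
      have hE : ((a * x, a * y) : S × S) ∈ Ω ∩ Erel a := by
        refine ⟨hΩax, ?_⟩
        show a * (a * x) = a * (a * y)
        rw [← mul_assoc, ← mul_assoc, h2]
      exact (EtoF a _ hE).2
    -- (a*x, a*y) ∈ F(a*x), hence ∈ E(a*x): (a*x)*(a*x) = (a*x)*(a*y)
    have hsq : (a * x) * (a * x) = (a * x) * (a * y) := by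
      have hFm : ((a * x, a * y) : S × S) ∈ Ω ∩ Frel (a * x) := by
        refine ⟨hΩax, ?_⟩
        show (a * x) * (a * x) = (a * y) * (a * x)
        rw [← mul_assoc, ← mul_assoc, hF]
      exact (FtoE (a * x) _ hFm).2
    have hsq2 : (a * x) * (a * y) = (a * y) * (a * y) := by
      rw [← mul_assoc, ← mul_assoc, hF]
    exact hqs (a * x) (a * y) hsq hsq2
  have part2 : ∀ a : S, Ω ∩ Erel a = Ω ∩ Erel (a * a) := by
    intro a
    ext ⟨x, y⟩
    simp only [Set.mem_inter_iff, Erel, Set.mem_setOf_eq]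
    constructor
    · rintro ⟨hΩ, h⟩
      exact ⟨hΩ, by rw [mul_assoc, h, mul_assoc]⟩
    · rintro ⟨hΩ, h⟩
      exact ⟨hΩ, key a x y hΩ h⟩
  have part1 : ∀ a b : S, Ω ∩ Erel (a * b) ⊆ Ω ∩ Erel (b * a) := by
    rintro a b ⟨x, y⟩ ⟨hΩ, h⟩
    have h' : (a * b) * x = (a * b) * y := h
    -- (x,y) ∈ Ω ∩ E(b*(a*b)) hence ∈ F(b*(a*b))
    have hF1 : x * (b * (a * b)) = y * (b * (a * b)) := by
      have hE1 : ((x, y) : S × S) ∈ Ω ∩ Erel (b * (a * b)) := by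
        refine ⟨hΩ, ?_⟩
        show (b * (a * b)) * x = (b * (a * b)) * y
        rw [mul_assoc b (a * b) x, h', mul_assoc b (a * b) y]
      exact (EtoF _ _ hE1).2
    -- hence (x,y) ∈ Ω ∩ F((b*a)*(b*a)), hence ∈ E((b*a)*(b*a))
    have hE2 : ((b * a) * (b * a)) * x = ((b * a) * (b * a)) * y := by
      have hF2 : ((x, y) : S × S) ∈ Ω ∩ Frel ((b * a) * (b * a)) := by
        refine ⟨hΩ, ?_⟩
        show x * ((b * a) * (b * a)) = y * ((b * a) * (b * a))
        have hrw : (b * a) * (b * a) = (b * (a * b)) * a := by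
          simp [mul_assoc]
        rw [hrw, ← mul_assoc x (b * (a * b)) a, ← mul_assoc y (b * (a * b)) a, hF1]
      exact (FtoE _ _ hF2).2
    exact ⟨hΩ, key (b * a) x y hΩ hE2⟩
  exact ⟨fun a b => Set.Subset.antisymm (part1 a b) (part1 b a), part2⟩
end

section
/- Let S be a quasi-separative semigroup, Ω ⊆ S × S satisfying conditions (i)–(iii) as above, and let ∼ be the congruence a ∼ b ⟺ Ω ∩ E(a) = Ω ∩ E(b). Then for every ∼-class T and every a ∈ T, the set Ω ∩ E(a) ∩ (T × T) is contained in the diagonal {(t,t) : t ∈ T}. -/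
theorem omega_class_diag {S : Type*} [Semigroup S]
    (hqs : ∀ x y : S, x * x = x * y → x * y = y * y → x = y)
    (Ω : Set (S × S))
    (h8 : ∀ a : S, Ω ∩ Erel a = Ω ∩ Frel a)
    (h9 : ∀ a b : S, (fun p : S × S => (b * p.1, b * p.2)) '' (Ω ∩ Erel (a * b)) ⊆ Ω)
    (h10 : ∀ a b : S, (fun p : S × S => (p.1 * a, p.2 * a)) '' (Ω ∩ Frel (a * b)) ⊆ Ω)
    (a : S) :
    Ω ∩ Erel a ∩ ({x | Ω ∩ Erel x = Ω ∩ Erel a} ×ˢ {x | Ω ∩ Erel x = Ω ∩ Erel a})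
      ⊆ {p : S × S | p.1 = p.2} := by
  rintro ⟨x, y⟩ ⟨hpa, hx, hy⟩
  have h1 : (x, y) ∈ Ω ∩ Erel x := hx ▸ hpa
  have h2 : (x, y) ∈ Ω ∩ Frel y := (h8 y) ▸ (hy ▸ hpa)
  exact hqs x y h1.2 h2.2
end

section
/- In a quasi-separative semigroup S, the relation Ω_S = {(x,y) : for all a,b ∈ S¹, axb = ayb ⟺ xba = yba ⟺ bax = bay} is left compatible: if (x,y) ∈ Ω_S and b ∈ S then (bx, by) ∈ Ω_S. -/
def OmegaS (S : Type*) [Semigroup S] : Set (S × S) :=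
  {p | ∀ a b : WithOne S,
    (a * ↑p.1 * b = a * ↑p.2 * b ↔ ↑p.1 * b * a = ↑p.2 * b * a) ∧
    (a * ↑p.1 * b = a * ↑p.2 * b ↔ b * a * ↑p.1 = b * a * ↑p.2)}

theorem omegaS_left_compatible {S : Type*} [Semigroup S]
    (hqs : ∀ x y : S, x * x = x * y → x * y = y * y → x = y)
    (x y b : S) (h : (x, y) ∈ OmegaS S) :
    (b * x, b * y) ∈ OmegaS S := by
  intro a c
  have h1 := (h (a * ↑b) c).1
  have h2 := (h (a * ↑b) c).2
  have h3 := (h (↑b) (c * a)).1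
  simp only [WithOne.coe_mul] at *
  constructor
  · simp only [← mul_assoc] at *
    exact ⟨fun e => h3.mpr (h1.mp e), fun e => h1.mpr (h3.mp e)⟩
  · simp only [← mul_assoc] at *
    exact h2
end

section
/- In a quasi-separative semigroup S, the relation Ω_S = {(x,y) : for all a,b ∈ S¹, axb = ayb ⟺ xba = yba ⟺ bax = bay} is right compatible: if (x,y) ∈ Ω_S and b ∈ S then (xb, yb) ∈ Ω_S. -/
theorem omegaS_right_compatible {S : Type*} [Semigroup S]
    (hqs : ∀ x y : S, x * x = x * y → x * y = y * y → x = y)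
    (x y b : S) (h : (x, y) ∈ OmegaS S) :
    (x * b, y * b) ∈ OmegaS S := by
  intro a c
  have h1 := (h a (↑b * c)).1
  have h2 := (h (c * a) (↑b : WithOne S)).1
  simp only [WithOne.coe_mul, mul_assoc] at h1 h2 ⊢
  exact ⟨h1, h1.trans h2.symm⟩
end

section
/- A semigroup is quasi-separative if and only if it is a semilattice of quasi-separative quasi-cancellative semigroups (i.e., there is a congruence whose quotient is a semilattice and whose classes are quasi-separative quasi-cancellative subsemigroups). -/
def IsQuasiSeparative (S : Type*) [Semigroup S] : Prop :=
  ∀ x y : S, x * x = x * y → x * y = y * y → x = y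

def IsQuasiCancellative (S : Type*) [Semigroup S] : Prop :=
  ∀ a b c : S,
    (∀ x y : WithOne S,
      (x * ↑b * y = x * ↑c * y ↔ y * x * ↑b = y * x * ↑c) ∧
      (x * ↑b * y = x * ↑c * y ↔ ↑b * y * x = ↑c * y * x)) →
    a * b = a * c → b = c

section QSAux

variable {S : Type*} [Semigroup S]

/-- The set of "semilattice congruences" on `S`. -/
private def SLSet (S : Type*) [Semigroup S] : Set (Con S) :=
  {ρ | (∀ x, ρ (x * x) x) ∧ (∀ x y, ρ (x * y) (y * x))}

/-- The least semilattice congruence. -/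
private def slCon (S : Type*) [Semigroup S] : Con S where
  r x y := ∀ ρ ∈ SLSet S, ρ x y
  iseqv := ⟨fun x ρ _ => ρ.refl x, fun h ρ hρ => ρ.symm (h ρ hρ),
    fun h1 h2 ρ hρ => ρ.trans (h1 ρ hρ) (h2 ρ hρ)⟩
  mul' h1 h2 := fun ρ hρ => ρ.mul (h1 ρ hρ) (h2 ρ hρ)

private lemma quotIdem (ρ : Con S) (hi : ∀ u : S, ρ (u*u) u) :
    ∀ x : ρ.Quotient, x*x = x := fun x =>
  Con.induction_on x fun u => by rw [← Con.coe_mul]; exact (Con.eq ρ).mpr (hi u)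

private lemma quotComm (ρ : Con S) (hc : ∀ u v : S, ρ (u*v) (v*u)) :
    ∀ x y : ρ.Quotient, x*y = y*x := fun x y =>
  Con.induction_on₂ x y fun u v => by
    rw [← Con.coe_mul, ← Con.coe_mul]; exact (Con.eq ρ).mpr (hc u v)

section Shapes
variable (ρ : Con S)
variable {a p q z w q' z' : S}

private lemma b1 (hi : ∀ u : S, ρ (u*u) u) (hc : ∀ u v : S, ρ (u*v) (v*u))
    (h1 : ρ q' a) (h : ρ (z*(q'*z')) a) : ρ (q'*(z'*(z*q'))) a := by
  have hid := quotIdem ρ hi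
  have hcm := quotComm ρ hc
  have hlc : ∀ x y z : ρ.Quotient, x*(y*z) = y*(x*z) := fun x y z => by
    rw [← mul_assoc, hcm x y, mul_assoc]
  have hid2 : ∀ x y : ρ.Quotient, x*(x*y) = x*y := fun x y => by rw [← mul_assoc, hid]
  rw [← Con.eq ρ] at h1 h ⊢
  simp only [Con.coe_mul] at h1 h ⊢
  rw [h1] at h ⊢
  simp only [hid, hid2, hcm, hlc, mul_assoc] at h ⊢
  exact h

private lemma b2 (hi : ∀ u : S, ρ (u*u) u) (hc : ∀ u v : S, ρ (u*v) (v*u))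
    (h1 : ρ q' a) (h : ρ (z*(q'*z')) a) : ρ (q'*(z'*(z*(q'*z')))) a := by
  have hid := quotIdem ρ hi
  have hcm := quotComm ρ hc
  have hlc : ∀ x y z : ρ.Quotient, x*(y*z) = y*(x*z) := fun x y z => by
    rw [← mul_assoc, hcm x y, mul_assoc]
  have hid2 : ∀ x y : ρ.Quotient, x*(x*y) = x*y := fun x y => by rw [← mul_assoc, hid]
  rw [← Con.eq ρ] at h1 h ⊢
  simp only [Con.coe_mul] at h1 h ⊢
  rw [h1] at h ⊢
  simp only [hid, hid2, hcm, hlc, mul_assoc] at h ⊢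
  exact h

private lemma b3 (hi : ∀ u : S, ρ (u*u) u) (hc : ∀ u v : S, ρ (u*v) (v*u))
    (h : ρ (p*z) a) : ρ (p*(z*z)) a := by
  have hid := quotIdem ρ hi
  have hcm := quotComm ρ hc
  have hlc : ∀ x y z : ρ.Quotient, x*(y*z) = y*(x*z) := fun x y z => by
    rw [← mul_assoc, hcm x y, mul_assoc]
  have hid2 : ∀ x y : ρ.Quotient, x*(x*y) = x*y := fun x y => by rw [← mul_assoc, hid]
  rw [← Con.eq ρ] at h ⊢
  simp only [Con.coe_mul] at h ⊢
  simp only [hid, hid2, hcm, hlc, mul_assoc] at h ⊢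
  exact h

private lemma b4 (hi : ∀ u : S, ρ (u*u) u) (hc : ∀ u v : S, ρ (u*v) (v*u))
    (h : ρ (p*(z*z)) a) : ρ (z*(p*z)) a := by
  have hid := quotIdem ρ hi
  have hcm := quotComm ρ hc
  have hlc : ∀ x y z : ρ.Quotient, x*(y*z) = y*(x*z) := fun x y z => by
    rw [← mul_assoc, hcm x y, mul_assoc]
  have hid2 : ∀ x y : ρ.Quotient, x*(x*y) = x*y := fun x y => by rw [← mul_assoc, hid]
  rw [← Con.eq ρ] at h ⊢
  simp only [Con.coe_mul] at h ⊢
  simp only [hid, hid2, hcm, hlc, mul_assoc] at h ⊢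
  exact h

private lemma b5 (hi : ∀ u : S, ρ (u*u) u) (hc : ∀ u v : S, ρ (u*v) (v*u))
    (h : ρ (p*(z*z)) a) : ρ (p*z) a := by
  have hid := quotIdem ρ hi
  have hcm := quotComm ρ hc
  have hlc : ∀ x y z : ρ.Quotient, x*(y*z) = y*(x*z) := fun x y z => by
    rw [← mul_assoc, hcm x y, mul_assoc]
  have hid2 : ∀ x y : ρ.Quotient, x*(x*y) = x*y := fun x y => by rw [← mul_assoc, hid]
  rw [← Con.eq ρ] at h ⊢
  simp only [Con.coe_mul] at h ⊢
  simp only [hid, hid2, hcm, hlc, mul_assoc] at h ⊢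
  exact h

private lemma b6 (hi : ∀ u : S, ρ (u*u) u) (hc : ∀ u v : S, ρ (u*v) (v*u))
    (h : ρ (z*q) a) : ρ (z*(z*q)) a := by
  have hid := quotIdem ρ hi
  have hcm := quotComm ρ hc
  have hlc : ∀ x y z : ρ.Quotient, x*(y*z) = y*(x*z) := fun x y z => by
    rw [← mul_assoc, hcm x y, mul_assoc]
  have hid2 : ∀ x y : ρ.Quotient, x*(x*y) = x*y := fun x y => by rw [← mul_assoc, hid]
  rw [← Con.eq ρ] at h ⊢
  simp only [Con.coe_mul] at h ⊢
  simp only [hid, hid2, hcm, hlc, mul_assoc] at h ⊢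
  exact h

private lemma b7 (hi : ∀ u : S, ρ (u*u) u) (hc : ∀ u v : S, ρ (u*v) (v*u))
    (h : ρ (z*(z*q)) a) : ρ ((z*q)*z) a := by
  have hid := quotIdem ρ hi
  have hcm := quotComm ρ hc
  have hlc : ∀ x y z : ρ.Quotient, x*(y*z) = y*(x*z) := fun x y z => by
    rw [← mul_assoc, hcm x y, mul_assoc]
  have hid2 : ∀ x y : ρ.Quotient, x*(x*y) = x*y := fun x y => by rw [← mul_assoc, hid]
  rw [← Con.eq ρ] at h ⊢
  simp only [Con.coe_mul] at h ⊢
  simp only [hid, hid2, hcm, hlc, mul_assoc] at h ⊢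
  exact h

private lemma b8 (hi : ∀ u : S, ρ (u*u) u) (hc : ∀ u v : S, ρ (u*v) (v*u))
    (h : ρ (z*(z*q)) a) : ρ (z*q) a := by
  have hid := quotIdem ρ hi
  have hcm := quotComm ρ hc
  have hlc : ∀ x y z : ρ.Quotient, x*(y*z) = y*(x*z) := fun x y z => by
    rw [← mul_assoc, hcm x y, mul_assoc]
  have hid2 : ∀ x y : ρ.Quotient, x*(x*y) = x*y := fun x y => by rw [← mul_assoc, hid]
  rw [← Con.eq ρ] at h ⊢
  simp only [Con.coe_mul] at h ⊢
  simp only [hid, hid2, hcm, hlc, mul_assoc] at h ⊢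
  exact h

private lemma b9 (hi : ∀ u : S, ρ (u*u) u) (hc : ∀ u v : S, ρ (u*v) (v*u))
    (h : ρ (p*(z*q)) a) : ρ ((p*z)*(z*q)) a := by
  have hid := quotIdem ρ hi
  have hcm := quotComm ρ hc
  have hlc : ∀ x y z : ρ.Quotient, x*(y*z) = y*(x*z) := fun x y z => by
    rw [← mul_assoc, hcm x y, mul_assoc]
  have hid2 : ∀ x y : ρ.Quotient, x*(x*y) = x*y := fun x y => by rw [← mul_assoc, hid]
  rw [← Con.eq ρ] at h ⊢
  simp only [Con.coe_mul] at h ⊢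
  simp only [hid, hid2, hcm, hlc, mul_assoc] at h ⊢
  exact h

private lemma b10 (hi : ∀ u : S, ρ (u*u) u) (hc : ∀ u v : S, ρ (u*v) (v*u))
    (h : ρ (p*(z*(z*q))) a) : ρ ((z*q)*(p*z)) a := by
  have hid := quotIdem ρ hi
  have hcm := quotComm ρ hc
  have hlc : ∀ x y z : ρ.Quotient, x*(y*z) = y*(x*z) := fun x y z => by
    rw [← mul_assoc, hcm x y, mul_assoc]
  have hid2 : ∀ x y : ρ.Quotient, x*(x*y) = x*y := fun x y => by rw [← mul_assoc, hid]
  rw [← Con.eq ρ] at h ⊢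
  simp only [Con.coe_mul] at h ⊢
  simp only [hid, hid2, hcm, hlc, mul_assoc] at h ⊢
  exact h

private lemma b11 (hi : ∀ u : S, ρ (u*u) u) (hc : ∀ u v : S, ρ (u*v) (v*u))
    (h : ρ (p*(z*(z*q))) a) : ρ (p*(z*q)) a := by
  have hid := quotIdem ρ hi
  have hcm := quotComm ρ hc
  have hlc : ∀ x y z : ρ.Quotient, x*(y*z) = y*(x*z) := fun x y z => by
    rw [← mul_assoc, hcm x y, mul_assoc]
  have hid2 : ∀ x y : ρ.Quotient, x*(x*y) = x*y := fun x y => by rw [← mul_assoc, hid]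
  rw [← Con.eq ρ] at h ⊢
  simp only [Con.coe_mul] at h ⊢
  simp only [hid, hid2, hcm, hlc, mul_assoc] at h ⊢
  exact h

private lemma b12 (hi : ∀ u : S, ρ (u*u) u) (hc : ∀ u v : S, ρ (u*v) (v*u))
    (h : ρ (p*(z*w)) a) : ρ (p*(w*(z*w))) a := by
  have hid := quotIdem ρ hi
  have hcm := quotComm ρ hc
  have hlc : ∀ x y z : ρ.Quotient, x*(y*z) = y*(x*z) := fun x y z => by
    rw [← mul_assoc, hcm x y, mul_assoc]
  have hid2 : ∀ x y : ρ.Quotient, x*(x*y) = x*y := fun x y => by rw [← mul_assoc, hid]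
  rw [← Con.eq ρ] at h ⊢
  simp only [Con.coe_mul] at h ⊢
  simp only [hid, hid2, hcm, hlc, mul_assoc] at h ⊢
  exact h

private lemma b13 (hi : ∀ u : S, ρ (u*u) u) (hc : ∀ u v : S, ρ (u*v) (v*u))
    (h : ρ (p*(z*w)) a) : ρ (((p*w)*z)*(p*w)) a := by
  have hid := quotIdem ρ hi
  have hcm := quotComm ρ hc
  have hlc : ∀ x y z : ρ.Quotient, x*(y*z) = y*(x*z) := fun x y z => by
    rw [← mul_assoc, hcm x y, mul_assoc]
  have hid2 : ∀ x y : ρ.Quotient, x*(x*y) = x*y := fun x y => by rw [← mul_assoc, hid]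
  rw [← Con.eq ρ] at h ⊢
  simp only [Con.coe_mul] at h ⊢
  simp only [hid, hid2, hcm, hlc, mul_assoc] at h ⊢
  exact h

private lemma b14 (hi : ∀ u : S, ρ (u*u) u) (hc : ∀ u v : S, ρ (u*v) (v*u))
    (h : ρ (p*(z*w)) a) : ρ (p*(w*z)) a := by
  have hid := quotIdem ρ hi
  have hcm := quotComm ρ hc
  have hlc : ∀ x y z : ρ.Quotient, x*(y*z) = y*(x*z) := fun x y z => by
    rw [← mul_assoc, hcm x y, mul_assoc]
  have hid2 : ∀ x y : ρ.Quotient, x*(x*y) = x*y := fun x y => by rw [← mul_assoc, hid]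
  rw [← Con.eq ρ] at h ⊢
  simp only [Con.coe_mul] at h ⊢
  simp only [hid, hid2, hcm, hlc, mul_assoc] at h ⊢
  exact h

private lemma b15 (hi : ∀ u : S, ρ (u*u) u) (hc : ∀ u v : S, ρ (u*v) (v*u))
    (h : ρ (z*(w*q)) a) : ρ (z*(q*(w*q))) a := by
  have hid := quotIdem ρ hi
  have hcm := quotComm ρ hc
  have hlc : ∀ x y z : ρ.Quotient, x*(y*z) = y*(x*z) := fun x y z => by
    rw [← mul_assoc, hcm x y, mul_assoc]
  have hid2 : ∀ x y : ρ.Quotient, x*(x*y) = x*y := fun x y => by rw [← mul_assoc, hid]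
  rw [← Con.eq ρ] at h ⊢
  simp only [Con.coe_mul] at h ⊢
  simp only [hid, hid2, hcm, hlc, mul_assoc] at h ⊢
  exact h

private lemma b16 (hi : ∀ u : S, ρ (u*u) u) (hc : ∀ u v : S, ρ (u*v) (v*u))
    (h : ρ (z*(w*q)) a) : ρ (((z*q)*w)*(z*q)) a := by
  have hid := quotIdem ρ hi
  have hcm := quotComm ρ hc
  have hlc : ∀ x y z : ρ.Quotient, x*(y*z) = y*(x*z) := fun x y z => by
    rw [← mul_assoc, hcm x y, mul_assoc]
  have hid2 : ∀ x y : ρ.Quotient, x*(x*y) = x*y := fun x y => by rw [← mul_assoc, hid]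
  rw [← Con.eq ρ] at h ⊢
  simp only [Con.coe_mul] at h ⊢
  simp only [hid, hid2, hcm, hlc, mul_assoc] at h ⊢
  exact h

private lemma b17 (hi : ∀ u : S, ρ (u*u) u) (hc : ∀ u v : S, ρ (u*v) (v*u))
    (h : ρ (z*(w*q)) a) : ρ (w*(z*q)) a := by
  have hid := quotIdem ρ hi
  have hcm := quotComm ρ hc
  have hlc : ∀ x y z : ρ.Quotient, x*(y*z) = y*(x*z) := fun x y z => by
    rw [← mul_assoc, hcm x y, mul_assoc]
  have hid2 : ∀ x y : ρ.Quotient, x*(x*y) = x*y := fun x y => by rw [← mul_assoc, hid]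
  rw [← Con.eq ρ] at h ⊢
  simp only [Con.coe_mul] at h ⊢
  simp only [hid, hid2, hcm, hlc, mul_assoc] at h ⊢
  exact h

private lemma b18 (hi : ∀ u : S, ρ (u*u) u) (hc : ∀ u v : S, ρ (u*v) (v*u))
    (h : ρ (p*(z*(w*q))) a) : ρ (p*(w*(z*(w*q)))) a := by
  have hid := quotIdem ρ hi
  have hcm := quotComm ρ hc
  have hlc : ∀ x y z : ρ.Quotient, x*(y*z) = y*(x*z) := fun x y z => by
    rw [← mul_assoc, hcm x y, mul_assoc]
  have hid2 : ∀ x y : ρ.Quotient, x*(x*y) = x*y := fun x y => by rw [← mul_assoc, hid]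
  rw [← Con.eq ρ] at h ⊢
  simp only [Con.coe_mul] at h ⊢
  simp only [hid, hid2, hcm, hlc, mul_assoc] at h ⊢
  exact h

private lemma b19 (hi : ∀ u : S, ρ (u*u) u) (hc : ∀ u v : S, ρ (u*v) (v*u))
    (h : ρ (p*(z*(w*q))) a) : ρ (((p*w)*z)*((q*p)*(w*q))) a := by
  have hid := quotIdem ρ hi
  have hcm := quotComm ρ hc
  have hlc : ∀ x y z : ρ.Quotient, x*(y*z) = y*(x*z) := fun x y z => by
    rw [← mul_assoc, hcm x y, mul_assoc]
  have hid2 : ∀ x y : ρ.Quotient, x*(x*y) = x*y := fun x y => by rw [← mul_assoc, hid]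
  rw [← Con.eq ρ] at h ⊢
  simp only [Con.coe_mul] at h ⊢
  simp only [hid, hid2, hcm, hlc, mul_assoc] at h ⊢
  exact h

private lemma b21 (hi : ∀ u : S, ρ (u*u) u) (hc : ∀ u v : S, ρ (u*v) (v*u))
    (h : ρ (p*(z*(w*q))) a) : ρ (p*(w*(z*q))) a := by
  have hid := quotIdem ρ hi
  have hcm := quotComm ρ hc
  have hlc : ∀ x y z : ρ.Quotient, x*(y*z) = y*(x*z) := fun x y z => by
    rw [← mul_assoc, hcm x y, mul_assoc]
  have hid2 : ∀ x y : ρ.Quotient, x*(x*y) = x*y := fun x y => by rw [← mul_assoc, hid]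
  rw [← Con.eq ρ] at h ⊢
  simp only [Con.coe_mul] at h ⊢
  simp only [hid, hid2, hcm, hlc, mul_assoc] at h ⊢
  exact h

end Shapes

end QSAux

theorem quasiSeparative_iff_semilattice_of_quasiCancellative
    {S : Type*} [Semigroup S] :
    IsQuasiSeparative S ↔
    ∃ r : Con S,
      (∀ x : r.Quotient, x * x = x) ∧
      (∀ x y : r.Quotient, x * y = y * x) ∧
      (∀ a : S, ∃ T : Subsemigroup S, (T : Set S) = {x | r x a} ∧
        IsQuasiSeparative T ∧ IsQuasiCancellative T) := by
  constructor
  · intro hQS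
    refine ⟨slCon S, ?_, ?_, ?_⟩
    · intro x
      refine Con.induction_on x fun u => ?_
      rw [← Con.coe_mul]
      exact (Con.eq _).mpr fun ρ hρ => hρ.1 u
    · intro x y
      refine Con.induction_on₂ x y fun u v => ?_
      rw [← Con.coe_mul, ← Con.coe_mul]
      exact (Con.eq _).mpr fun ρ hρ => hρ.2 u v
    · intro a
      let T : Subsemigroup S :=
        ⟨{x | slCon S x a}, fun {x y} hx hy ρ hρ =>
          ρ.trans (ρ.mul (hx ρ hρ) (hy ρ hρ)) (hρ.1 a)⟩
      refine ⟨T, rfl, ?_, ?_⟩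
      · -- IsQuasiSeparative T
        intro x y h1 h2
        apply Subtype.ext
        apply hQS (x : S) (y : S)
        · exact_mod_cast congrArg Subtype.val h1
        · exact_mod_cast congrArg Subtype.val h2
      · -- IsQuasiCancellative T
        intro d b c H hd
        have hB : slCon S (b : S) a := b.2
        have hC : slCon S (c : S) a := c.2
        have hD : slCon S (d : S) a := d.2
        -- translate the hypothesis H into statements about S
        have K1 : ∀ u : S, slCon S u a →
            ((u*(b:S) = u*(c:S)) ↔ ((b:S)*u = (c:S)*u)) := by
          intro u hu
          have h := (H (↑(⟨u, hu⟩ : ↥T)) 1).2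
          simpa [← WithOne.coe_mul, WithOne.coe_inj, Subtype.ext_iff, mul_assoc] using h
        have K2 : ∀ u v : S, slCon S u a → slCon S v a →
            ((u*(b:S)*v = u*(c:S)*v) ↔ (v*u*(b:S) = v*u*(c:S))) := by
          intro u v hu hv
          have h := (H (↑(⟨u, hu⟩ : ↥T)) (↑(⟨v, hv⟩ : ↥T))).1
          simpa [← WithOne.coe_mul, WithOne.coe_inj, Subtype.ext_iff, mul_assoc] using h
        -- the set Q
        set Q : Set S := {w | slCon S w a ∧ w*(b:S) = w*(c:S)} with hQdef
        have Rsq : ∀ {w : S}, slCon S w a → slCon S (w*w) a := fun {w} h ρ hρ =>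
          ρ.trans (ρ.mul (h ρ hρ) (h ρ hρ)) (hρ.1 a)
        have Rmul : ∀ {u v : S}, slCon S u a → slCon S v a → slCon S (u*v) a :=
          fun {u v} hu hv ρ hρ => ρ.trans (ρ.mul (hu ρ hρ) (hv ρ hρ)) (hρ.1 a)
        have Rrot : ∀ {u v : S}, slCon S (u*v) a → slCon S (v*u) a :=
          fun {u v} h ρ hρ => ρ.trans (hρ.2 v u) (h ρ hρ)
        have Rroot : ∀ {z : S}, slCon S (z*z) a → slCon S z a :=
          fun {z} h ρ hρ => ρ.trans (ρ.symm (hρ.1 z)) (h ρ hρ)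
        have absL : ∀ (z w : S), w ∈ Q → slCon S (z*w) a → z*w ∈ Q := by
          rintro z w ⟨hw, e⟩ hT
          exact ⟨hT, by rw [mul_assoc, e, ← mul_assoc]⟩
        have absR : ∀ (w z : S), w ∈ Q → slCon S (w*z) a → w*z ∈ Q := by
          rintro w z ⟨hw, e⟩ hT
          refine ⟨hT, (K1 _ hT).mpr ?_⟩
          rw [← mul_assoc, (K1 w hw).mp e, mul_assoc]
        have root : ∀ (z : S), slCon S z a → z*z ∈ Q → z ∈ Q := by
          rintro z hz ⟨-, e⟩
          have e1 : z*(b:S)*z = z*(c:S)*z := (K2 z z hz hz).mpr e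
          have e2 : (b:S)*z*(b:S)*z = (b:S)*z*(c:S)*z := by
            have h' := congrArg (fun t => (b:S)*t) e1
            simpa only [← mul_assoc] using h'
          have e3 := (K2 ((b:S)*z) z (Rmul hB hz) hz).mp e2
          have q1 : (z*(b:S))*(z*(b:S)) = (z*(b:S))*(z*(c:S)) := by
            simpa only [← mul_assoc] using e3
          have q2 : (z*(b:S))*(z*(c:S)) = (z*(c:S))*(z*(c:S)) := by
            have h' := congrArg (fun t => t*(c:S)) e1
            simpa only [← mul_assoc] using h'
          exact ⟨hz, hQS _ _ q1 q2⟩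
        have mid : ∀ (z q' z' : S), q' ∈ Q → slCon S (z*(q'*z')) a → z*(q'*z') ∈ Q := by
          intro z q' z' hq' hT
          have hg : slCon S (q'*(z'*(z*q'))) a := fun ρ hρ =>
            b1 ρ hρ.1 hρ.2 (hq'.1 ρ hρ) (hT ρ hρ)
          have hgQ : q'*(z'*(z*q')) ∈ Q := absR q' (z'*(z*q')) hq' hg
          have E1 : (q'*(z'*(z*q')))*z' = q'*(z'*(z*(q'*z'))) := by simp only [mul_assoc]
          have hhQ : (q'*(z'*(z*q')))*z' ∈ Q := absR _ z' hgQ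
            (by rw [E1]; exact fun ρ hρ => b2 ρ hρ.1 hρ.2 (hq'.1 ρ hρ) (hT ρ hρ))
          rw [E1] at hhQ
          have E2 : z*(q'*(z'*(z*(q'*z')))) = (z*(q'*z'))*(z*(q'*z')) := by
            simp only [mul_assoc]
          have hWW : z*(q'*(z'*(z*(q'*z')))) ∈ Q := absL z _ hhQ (by rw [E2]; exact Rsq hT)
          rw [E2] at hWW
          exact root _ hT hWW
        have rot : ∀ (u v : S), u*v ∈ Q → slCon S (v*u) a → v*u ∈ Q := by
          intro u v huv hT
          have E : v*((u*v)*u) = (v*u)*(v*u) := by simp only [mul_assoc]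
          have h1 : v*((u*v)*u) ∈ Q := mid v (u*v) u huv (by rw [E]; exact Rsq hT)
          rw [E] at h1
          exact root _ hT h1
        have ins : ∀ (u z v : S), u*v ∈ Q → slCon S (u*(z*v)) a → u*(z*v) ∈ Q := by
          intro u z v huv hT
          have hvu : v*u ∈ Q := rot u v huv (Rrot huv.1)
          have E : (u*z)*((v*u)*(z*v)) = (u*(z*v))*(u*(z*v)) := by simp only [mul_assoc]
          have h1 : (u*z)*((v*u)*(z*v)) ∈ Q := mid (u*z) (v*u) (z*v) hvu
            (by rw [E]; exact Rsq hT)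
          rw [E] at h1
          exact root _ hT h1
        -- the idempotency exchange lemmas
        have Inone : ∀ z : S, (z*z ∈ Q ↔ z ∈ Q) := fun z =>
          ⟨fun h => root z (Rroot h.1) h, fun h => absR z z h (Rsq h.1)⟩
        have Ileft : ∀ p z : S, (p*(z*z) ∈ Q ↔ p*z ∈ Q) := by
          intro p z
          constructor
          · intro h
            have E0 : (p*z)*z = p*(z*z) := by rw [mul_assoc]
            have h' : (p*z)*z ∈ Q := by rw [E0]; exact h
            have hrot : z*(p*z) ∈ Q := rot (p*z) z h'
              (fun ρ hρ => b4 ρ hρ.1 hρ.2 (h.1 ρ hρ))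
            have hW : slCon S (p*z) a := fun ρ hρ => b5 ρ hρ.1 hρ.2 (h.1 ρ hρ)
            have E : p*(z*(p*z)) = (p*z)*(p*z) := by simp only [mul_assoc]
            have h2 : p*(z*(p*z)) ∈ Q := absL p _ hrot (by rw [E]; exact Rsq hW)
            rw [E] at h2
            exact root _ hW h2
          · intro h
            have hT : slCon S ((p*z)*z) a := by
              have h' : slCon S (p*(z*z)) a := fun ρ hρ => b3 ρ hρ.1 hρ.2 (h.1 ρ hρ)
              rwa [← mul_assoc] at h'
            have h2 : (p*z)*z ∈ Q := absR (p*z) z h hT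
            rwa [mul_assoc] at h2
        have Iright : ∀ z q : S, (z*(z*q) ∈ Q ↔ z*q ∈ Q) := by
          intro z q
          constructor
          · intro h
            have hrot : (z*q)*z ∈ Q := rot z (z*q) h
              (fun ρ hρ => b7 ρ hρ.1 hρ.2 (h.1 ρ hρ))
            have hW : slCon S (z*q) a := fun ρ hρ => b8 ρ hρ.1 hρ.2 (h.1 ρ hρ)
            have E : ((z*q)*z)*q = (z*q)*(z*q) := by simp only [mul_assoc]
            have h2 : ((z*q)*z)*q ∈ Q := absR _ q hrot (by rw [E]; exact Rsq hW)
            rw [E] at h2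
            exact root _ hW h2
          · intro h
            exact absL z (z*q) h (fun ρ hρ => b6 ρ hρ.1 hρ.2 (h.1 ρ hρ))
        have Iboth : ∀ p z q : S, (p*(z*(z*q)) ∈ Q ↔ p*(z*q) ∈ Q) := by
          intro p z q
          constructor
          · intro h
            have E0 : (p*z)*(z*q) = p*(z*(z*q)) := by simp only [mul_assoc]
            have h' : (p*z)*(z*q) ∈ Q := by rw [E0]; exact h
            have hrot : (z*q)*(p*z) ∈ Q := rot (p*z) (z*q) h'
              (fun ρ hρ => b10 ρ hρ.1 hρ.2 (h.1 ρ hρ))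
            have hW : slCon S (p*(z*q)) a := fun ρ hρ => b11 ρ hρ.1 hρ.2 (h.1 ρ hρ)
            have E : p*(((z*q)*(p*z))*q) = (p*(z*q))*(p*(z*q)) := by simp only [mul_assoc]
            have h2 : p*(((z*q)*(p*z))*q) ∈ Q := mid p ((z*q)*(p*z)) q hrot
              (by rw [E]; exact Rsq hW)
            rw [E] at h2
            exact root _ hW h2
          · intro h
            have huv : (p*z)*q ∈ Q := by
              have h' := h; rwa [← mul_assoc] at h'
            have h2 : (p*z)*(z*q) ∈ Q := ins (p*z) z q huv
              (fun ρ hρ => b9 ρ hρ.1 hρ.2 (h.1 ρ hρ))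
            have E0 : (p*z)*(z*q) = p*(z*(z*q)) := by simp only [mul_assoc]
            rwa [E0] at h2
        -- the commutativity exchange lemmas
        have IInone : ∀ z w : S, (z*w ∈ Q ↔ w*z ∈ Q) := fun z w =>
          ⟨fun h => rot z w h (Rrot h.1), fun h => rot w z h (Rrot h.1)⟩
        have IIleft1 : ∀ p z w : S, p*(z*w) ∈ Q → p*(w*z) ∈ Q := by
          intro p z w h
          have m1 : p*(w*(z*w)) ∈ Q := ins p w (z*w) h
            (fun ρ hρ => b12 ρ hρ.1 hρ.2 (h.1 ρ hρ))
          have E1 : ((p*w)*z)*w = p*(w*(z*w)) := by simp only [mul_assoc]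
          have m1' : ((p*w)*z)*w ∈ Q := by rw [E1]; exact m1
          have m2 : ((p*w)*z)*(p*w) ∈ Q := ins ((p*w)*z) p w m1'
            (fun ρ hρ => b13 ρ hρ.1 hρ.2 (h.1 ρ hρ))
          have hW : slCon S (p*(w*z)) a := fun ρ hρ => b14 ρ hρ.1 hρ.2 (h.1 ρ hρ)
          have E2 : (((p*w)*z)*(p*w))*z = (p*(w*z))*(p*(w*z)) := by simp only [mul_assoc]
          have m3 : (((p*w)*z)*(p*w))*z ∈ Q := absR _ z m2 (by rw [E2]; exact Rsq hW)
          rw [E2] at m3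
          exact root _ hW m3
        have IIright1 : ∀ z w q : S, z*(w*q) ∈ Q → w*(z*q) ∈ Q := by
          intro z w q h
          have m1 : z*(q*(w*q)) ∈ Q := ins z q (w*q) h
            (fun ρ hρ => b15 ρ hρ.1 hρ.2 (h.1 ρ hρ))
          have E1 : ((z*q)*w)*q = z*(q*(w*q)) := by simp only [mul_assoc]
          have m1' : ((z*q)*w)*q ∈ Q := by rw [E1]; exact m1
          have m2 : ((z*q)*w)*(z*q) ∈ Q := ins ((z*q)*w) z q m1'
            (fun ρ hρ => b16 ρ hρ.1 hρ.2 (h.1 ρ hρ))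
          have hW : slCon S (w*(z*q)) a := fun ρ hρ => b17 ρ hρ.1 hρ.2 (h.1 ρ hρ)
          have E2 : w*(((z*q)*w)*(z*q)) = (w*(z*q))*(w*(z*q)) := by simp only [mul_assoc]
          have m3 : w*(((z*q)*w)*(z*q)) ∈ Q := absL w _ m2 (by rw [E2]; exact Rsq hW)
          rw [E2] at m3
          exact root _ hW m3
        have IIboth1 : ∀ p z w q : S, p*(z*(w*q)) ∈ Q → p*(w*(z*q)) ∈ Q := by
          intro p z w q h
          have m1 : p*(w*(z*(w*q))) ∈ Q := ins p w (z*(w*q)) h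
            (fun ρ hρ => b18 ρ hρ.1 hρ.2 (h.1 ρ hρ))
          have E1 : ((p*w)*z)*(w*q) = p*(w*(z*(w*q))) := by simp only [mul_assoc]
          have m1' : ((p*w)*z)*(w*q) ∈ Q := by rw [E1]; exact m1
          have m2 : ((p*w)*z)*((q*p)*(w*q)) ∈ Q := ins ((p*w)*z) (q*p) (w*q) m1'
            (fun ρ hρ => b19 ρ hρ.1 hρ.2 (h.1 ρ hρ))
          have E2 : (((p*w)*z)*((q*p)*w))*q = ((p*w)*z)*((q*p)*(w*q)) := by
            simp only [mul_assoc]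
          have m2' : (((p*w)*z)*((q*p)*w))*q ∈ Q := by rw [E2]; exact m2
          have hW : slCon S (p*(w*(z*q))) a := fun ρ hρ => b21 ρ hρ.1 hρ.2 (h.1 ρ hρ)
          have E3 : (((p*w)*z)*((q*p)*w))*(z*q) = (p*(w*(z*q)))*(p*(w*(z*q))) := by
            simp only [mul_assoc]
          have m3 : (((p*w)*z)*((q*p)*w))*(z*q) ∈ Q :=
            ins (((p*w)*z)*((q*p)*w)) z q m2' (by rw [E3]; exact Rsq hW)
          rw [E3] at m3
          exact root _ hW m3
        -- the refined congruence
        obtain ⟨ρ', hρ'SL, hρ'iff⟩ :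
            ∃ ρ' ∈ SLSet S, ∀ x y : S, ρ' x y → (x ∈ Q ↔ y ∈ Q) := by
          refine ⟨⟨⟨fun x y => slCon S x y ∧
            (∀ p q : S, (p*(x*q) ∈ Q ↔ p*(y*q) ∈ Q)) ∧
            (∀ p : S, (p*x ∈ Q ↔ p*y ∈ Q)) ∧
            (∀ q : S, (x*q ∈ Q ↔ y*q ∈ Q)) ∧
            (x ∈ Q ↔ y ∈ Q), ⟨?_, ?_, ?_⟩⟩, ?_⟩, ⟨?_, ?_⟩, ?_⟩
          · -- refl
            intro x
            exact ⟨(slCon S).refl x, fun p q => Iff.rfl, fun p => Iff.rfl,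
              fun q => Iff.rfl, Iff.rfl⟩
          · -- symm
            rintro x y ⟨h0, h1, h2, h3, h4⟩
            exact ⟨(slCon S).symm h0, fun p q => (h1 p q).symm, fun p => (h2 p).symm,
              fun q => (h3 q).symm, h4.symm⟩
          · -- trans
            rintro x y z ⟨h0, h1, h2, h3, h4⟩ ⟨g0, g1, g2, g3, g4⟩
            exact ⟨(slCon S).trans h0 g0, fun p q => (h1 p q).trans (g1 p q),
              fun p => (h2 p).trans (g2 p), fun q => (h3 q).trans (g3 q), h4.trans g4⟩
          · -- mul'
            rintro w x y z ⟨hw0, hw1, hw2, hw3, hw4⟩ ⟨hy0, hy1, hy2, hy3, hy4⟩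
            refine ⟨fun ρ hρ => ρ.mul (hw0 ρ hρ) (hy0 ρ hρ), ?_, ?_, ?_, ?_⟩
            · intro p q
              rw [show p*((w*y)*q) = p*(w*(y*q)) from by rw [mul_assoc],
                hw1 p (y*q),
                show p*(x*(y*q)) = (p*x)*(y*q) from by simp only [mul_assoc],
                hy1 (p*x) q,
                show (p*x)*(z*q) = p*((x*z)*q) from by simp only [mul_assoc]]
            · intro p
              rw [show p*(w*y) = (p*w)*y from (mul_assoc p w y).symm,
                hy2 (p*w),
                show (p*w)*z = p*(w*z) from mul_assoc p w z,
                hw1 p z]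
            · intro q
              rw [show (w*y)*q = w*(y*q) from mul_assoc w y q,
                hw3 (y*q),
                hy1 x q,
                show x*(z*q) = (x*z)*q from (mul_assoc x z q).symm]
            · rw [hw3 y, hy2 x]
          · -- idempotency of the quotient
            intro x
            refine ⟨fun ρ hρ => hρ.1 x, ?_, ?_, ?_, ?_⟩
            · intro p q
              rw [show p*((x*x)*q) = p*(x*(x*q)) from by simp only [mul_assoc]]
              exact Iboth p x q
            · intro p
              exact Ileft p x
            · intro q
              rw [show (x*x)*q = x*(x*q) from mul_assoc x x q]
              exact Iright x q
            · exact Inone x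
          · -- commutativity of the quotient
            intro x y
            refine ⟨fun ρ hρ => hρ.2 x y, ?_, ?_, ?_, ?_⟩
            · intro p q
              rw [show p*((x*y)*q) = p*(x*(y*q)) from by simp only [mul_assoc],
                show p*((y*x)*q) = p*(y*(x*q)) from by simp only [mul_assoc]]
              exact ⟨IIboth1 p x y q, IIboth1 p y x q⟩
            · intro p
              exact ⟨IIleft1 p x y, IIleft1 p y x⟩
            · intro q
              rw [show (x*y)*q = x*(y*q) from mul_assoc x y q,
                show (y*x)*q = y*(x*q) from mul_assoc y x q]
              exact ⟨IIright1 x y q, IIright1 y x q⟩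
            · exact IInone x y
          · -- the last component
            exact fun x y h => h.2.2.2.2
        -- conclude
        have hdS : (d:S)*(b:S) = (d:S)*(c:S) := by
          exact_mod_cast congrArg Subtype.val hd
        have hDQ : (d:S) ∈ Q := ⟨hD, hdS⟩
        have hRDB : slCon S (d:S) (b:S) := fun ρ hρ =>
          ρ.trans (hD ρ hρ) (ρ.symm (hB ρ hρ))
        have hRDC : slCon S (d:S) (c:S) := fun ρ hρ =>
          ρ.trans (hD ρ hρ) (ρ.symm (hC ρ hρ))
        have hBQ : (b:S) ∈ Q := (hρ'iff _ _ (hRDB ρ' hρ'SL)).mp hDQ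
        have hCQ : (c:S) ∈ Q := (hρ'iff _ _ (hRDC ρ' hρ'SL)).mp hDQ
        have e1 : (b:S)*(b:S) = (b:S)*(c:S) := hBQ.2
        have e2 : (b:S)*(c:S) = (c:S)*(c:S) := (K1 (c:S) hC).mp hCQ.2
        exact Subtype.ext (hQS _ _ e1 e2)
  · rintro ⟨r, hid, hcm, hcls⟩ x y h1 h2
    have h3 : ((x*x : S) : r.Quotient) = ((y*y : S) : r.Quotient) := by rw [h1, h2]
    rw [Con.coe_mul, Con.coe_mul, hid, hid] at h3
    have rxy : r x y := (Con.eq r).mp h3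
    obtain ⟨T, hT, hqs, -⟩ := hcls y
    have hx : x ∈ T := by
      have : x ∈ (T : Set S) := by rw [hT]; exact rxy
      exact this
    have hy : y ∈ T := by
      have : y ∈ (T : Set S) := by rw [hT]; exact r.refl y
      exact this
    have h1' : (⟨x, hx⟩ : T)*(⟨x, hx⟩ : T) = (⟨x, hx⟩ : T)*(⟨y, hy⟩ : T) := by
      apply Subtype.ext; exact h1
    have h2' : (⟨x, hx⟩ : T)*(⟨y, hy⟩ : T) = (⟨y, hy⟩ : T)*(⟨y, hy⟩ : T) := by
      apply Subtype.ext; exact h2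
    exact congrArg Subtype.val (hqs _ _ h1' h2')
end

section
/- Every separative quasi-cancellative semigroup is cancellative (both left and right cancellative). -/
/-!
Burmistrovich's lemma: in a separative semigroup `x b y = x c y` forces `b y x = c y x` and,
dually, `y x b = y x c`. Adjoining an identity preserves separativity, so these rotations hold
for all `x y ∈ S¹`; hence the three equalities in the hypothesis of quasi-cancellativity are
always equivalent, and quasi-cancellativity becomes plain left cancellativity. Right
cancellativity follows since `b a = c a` rotates to `a b = a c`.
-/

def LeftSeparative (M : Type*) [Mul M] : Prop :=
  ∀ x y : M, x * x = x * y → y * y = y * x → x = y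

def RightSeparative (M : Type*) [Mul M] : Prop :=
  ∀ x y : M, x * x = y * x → y * y = x * y → x = y

namespace LeftSeparative

variable {M : Type*}

theorem withOne [Mul M] (h : LeftSeparative M) : LeftSeparative (WithOne M) := by
  intro x y
  induction x using WithOne.recOneCoe <;> induction y using WithOne.recOneCoe
  case one.one => exact fun _ _ => rfl
  case one.coe t => intro h₁ _; simp at h₁
  case coe.one s => intro _ h₂; simp at h₂
  case coe.coe s t =>
    simp only [← WithOne.coe_mul, WithOne.coe_inj]
    exact h s t

theorem mul_rotate_eq [Semigroup M] (h : LeftSeparative M) {b c x y : M}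
    (hbc : x * b * y = x * c * y) : b * y * x = c * y * x := by
  have key : ∀ p q : M, p * y * x * (q * y * x) = p * y * (x * q * y * x) := by
    intro p q; simp only [mul_assoc]
  apply h
  · rw [key b b, hbc, ← key b c]
  · rw [key c c, ← hbc, ← key c b]

end LeftSeparative

namespace RightSeparative

variable {M : Type*}

theorem withOne [Mul M] (h : RightSeparative M) : RightSeparative (WithOne M) := by
  intro x y
  induction x using WithOne.recOneCoe <;> induction y using WithOne.recOneCoe
  case one.one => exact fun _ _ => rfl
  case one.coe t => intro h₁ _; simp at h₁
  case coe.one s => intro _ h₂; simp at h₂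
  case coe.coe s t =>
    simp only [← WithOne.coe_mul, WithOne.coe_inj]
    exact h s t

theorem mul_rotate_rev_eq [Semigroup M] (h : RightSeparative M) {b c x y : M}
    (hbc : x * b * y = x * c * y) : y * x * b = y * x * c := by
  have key : ∀ p q : M, y * x * p * (y * x * q) = y * (x * p * y * x * q) := by
    intro p q; simp only [mul_assoc]
  apply h
  · rw [key b b, hbc, ← key c b]
  · rw [key c c, ← hbc, ← key b c]

theorem mul_left_eq_of_mul_right_eq [Semigroup M] (h : RightSeparative M) {a b c : M}
    (hbc : b * a = c * a) : a * b = a * c := by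
  have key : ∀ p q : M, a * p * (a * q) = a * (p * a) * q := by
    intro p q; simp only [mul_assoc]
  apply h
  · rw [key b b, hbc, ← key c b]
  · rw [key c c, ← hbc, ← key b c]

end RightSeparative

theorem mul_mul_eq_iff_rotations {M : Type*} [Monoid M] (hl : LeftSeparative M)
    (hr : RightSeparative M) (b c x y : M) :
    (x * b * y = x * c * y ↔ y * x * b = y * x * c) ∧
      (x * b * y = x * c * y ↔ b * y * x = c * y * x) := by
  have of_rotate : b * y * x = c * y * x → x * b * y = x * c * y := fun hC => by
    simpa [mul_assoc] using hr.mul_rotate_rev_eq (x := 1) (b := b * y) (c := c * y) (y := x)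
      (by simpa [mul_assoc] using hC)
  have rotate_of_rotate_rev : y * x * b = y * x * c → b * y * x = c * y * x := fun hB => by
    simpa [mul_assoc] using hl.mul_rotate_eq (x := y * x) (y := 1) (by simpa using hB)
  exact ⟨⟨hr.mul_rotate_rev_eq, of_rotate ∘ rotate_of_rotate_rev⟩, ⟨hl.mul_rotate_eq, of_rotate⟩⟩

theorem separative_quasiCancellative_is_cancellative {S : Type*} [Semigroup S]
    (hsep : (∀ x y : S, x * x = x * y → y * y = y * x → x = y) ∧
            (∀ x y : S, x * x = y * x → y * y = x * y → x = y))
    (hqc : ∀ a b c : S,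
      (∀ x y : WithOne S,
        (x * ↑b * y = x * ↑c * y ↔ y * x * ↑b = y * x * ↑c) ∧
        (x * ↑b * y = x * ↑c * y ↔ ↑b * y * x = ↑c * y * x)) →
      a * b = a * c → b = c) :
    (∀ a b c : S, a * b = a * c → b = c) ∧
    (∀ a b c : S, b * a = c * a → b = c) := by
  obtain ⟨hl, hr⟩ : LeftSeparative S ∧ RightSeparative S := hsep
  have left_cancel : ∀ a b c : S, a * b = a * c → b = c := fun a b c =>
    hqc a b c (mul_mul_eq_iff_rotations hl.withOne hr.withOne b c)
  exact ⟨left_cancel, fun a b c h => left_cancel a b c (hr.mul_left_eq_of_mul_right_eq h)⟩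
end

section
/- Every quasi-cancellative weakly balanced semigroup is weakly cancellative. -/
/-!
If `a * x = a * y` and `x * b = y * b`, weak balance lets `x, y` be moved past any factor:
`s * x = s * y ↔ x * s = y * s`, and `u * x * v = u * y * v ↔ x * (v * u) = y * (v * u)`.
Both sides of each equivalence in the definition of quasi-cancellativity (for `b, c := x, y`)
thus reduce to `x * w = y * w` with `w = v * u` in `S¹`, so quasi-cancellativity applied to
`a * x = a * y` gives `x = y`.
-/

def IsWeaklyBalanced (S : Type*) [Semigroup S] : Prop :=
  ∀ a b x y : S, a * x = a * y → x * b = y * b → x * a = y * a ∧ b * x = b * y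

namespace IsWeaklyBalanced

variable {S : Type*} [Semigroup S] (hwb : IsWeaklyBalanced S)
  {a b x y : S} (hax : a * x = a * y) (hxb : x * b = y * b)
include hwb hax hxb

theorem mul_left_eq_iff_mul_right_eq (s : S) : s * x = s * y ↔ x * s = y * s :=
  ⟨fun h => (hwb s b x y h hxb).1, fun h => (hwb a s x y hax h).2⟩

theorem mul_mul_eq_iff (u v : S) : u * x * v = u * y * v ↔ x * (v * u) = y * (v * u) := by
  constructor
  · intro h
    have hu : u * (x * v) = u * (y * v) := by simpa only [mul_assoc] using h
    have hva : x * v * a = y * v * a := by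
      simpa only [mul_assoc] using
        (mul_left_eq_iff_mul_right_eq hwb hax hxb (v * a)).1 (by rw [mul_assoc, hax, mul_assoc])
    simpa only [mul_assoc] using (hwb u a (x * v) (y * v) hu hva).1
  · intro h
    have hav : a * (x * v) = a * (y * v) := by rw [← mul_assoc, hax, mul_assoc]
    have hvu : x * v * u = y * v * u := by simpa only [mul_assoc] using h
    simpa only [mul_assoc] using (hwb a u (x * v) (y * v) hav hvu).2

theorem withOne_mul_left_eq_iff_mul_right_eq (w : WithOne S) :
    w * x = w * y ↔ (x : WithOne S) * w = y * w := by
  induction w using WithOne.recOneCoe with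
  | one => simp only [one_mul, mul_one]
  | coe s =>
    simpa only [← WithOne.coe_mul, WithOne.coe_inj] using
      mul_left_eq_iff_mul_right_eq hwb hax hxb s

theorem withOne_mul_mul_eq_iff (u v : WithOne S) :
    u * x * v = u * y * v ↔ (x : WithOne S) * (v * u) = y * (v * u) := by
  induction u using WithOne.recOneCoe with
  | one => simp only [one_mul, mul_one]
  | coe s =>
    induction v using WithOne.recOneCoe with
    | one =>
      simpa only [one_mul, mul_one, ← WithOne.coe_mul, WithOne.coe_inj] using
        mul_left_eq_iff_mul_right_eq hwb hax hxb s
    | coe t =>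
      simpa only [← WithOne.coe_mul, WithOne.coe_inj] using mul_mul_eq_iff hwb hax hxb s t

end IsWeaklyBalanced

theorem quasiCancellative_weaklyBalanced_is_weaklyCancellative
    {S : Type*} [Semigroup S]
    (hqc : ∀ a b c : S,
      (∀ x y : WithOne S,
        (x * ↑b * y = x * ↑c * y ↔ y * x * ↑b = y * x * ↑c) ∧
        (x * ↑b * y = x * ↑c * y ↔ ↑b * y * x = ↑c * y * x)) →
      a * b = a * c → b = c)
    (hwb : ∀ a b x y : S, a * x = a * y → x * b = y * b → x * a = y * a ∧ b * x = b * y) :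
    ∀ a b x y : S, a * x = a * y → x * b = y * b → x = y := by
  intro a b x y hax hxb
  have hwb : IsWeaklyBalanced S := hwb
  refine hqc a x y (fun u v => ⟨?_, ?_⟩) hax
  · rw [hwb.withOne_mul_mul_eq_iff hax hxb, ← hwb.withOne_mul_left_eq_iff_mul_right_eq hax hxb]
  · rw [hwb.withOne_mul_mul_eq_iff hax hxb, mul_assoc, mul_assoc]
end

section
/- In a weakly cancellative semigroup S, for all a, x, y ∈ S: if a²x = a²y and xa² = ya², then ax = ay and xa = ya. -/
theorem weaklyCancellative_sq_cancel {S : Type*} [Semigroup S]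
    (hwc : ∀ a b x y : S, a * x = a * y → x * b = y * b → x = y)
    (a x y : S) (h1 : a * a * x = a * a * y) (h2 : x * (a * a) = y * (a * a)) :
    a * x = a * y ∧ x * a = y * a := by
  have key : a * x * a = a * y * a := by
    apply hwc a a
    · calc a * (a * x * a) = (a * a * x) * a := by simp [mul_assoc]
      _ = (a * a * y) * a := by rw [h1]
      _ = a * (a * y * a) := by simp [mul_assoc]
    · calc (a * x * a) * a = a * (x * (a * a)) := by simp [mul_assoc]
      _ = a * (y * (a * a)) := by rw [h2]
      _ = (a * y * a) * a := by simp [mul_assoc]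
  constructor
  · exact hwc a a _ _ (by simpa [mul_assoc] using h1) key
  · apply hwc a a
    · simpa [mul_assoc] using key
    · simpa [mul_assoc] using h2
end
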